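/- Let p₁ and p₂ be probability densities on ℝ, each with finite mean, strictly positive finite variance, and finite differential entropy, and let p(ξ₁,ξ₂) := p₁(ξ₁)·p₂(ξ₂) be the product density on ℝ². Then the Gaussian density matching the mean vector and covariance matrix of p factorizes as the product of the Gaussian densities matching p₁ and p₂, and the negentropies satisfy N[p] = N[p₁] + N[p₂]. -/

import Mathlib

open MeasureTheory Real

/-- Differential entropy (in bits) of a density on ℝ. -/
noncomputable def H1 (p : ℝ → ℝ) : ℝ := -∫ x : ℝ, p x * Real.logb 2 (p x)

/-- Differential entropy (in bits) of a density on ℝ². -/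
noncomputable def H2 (p : ℝ × ℝ → ℝ) : ℝ := -∫ ξ : ℝ × ℝ, p ξ * Real.logb 2 (p ξ)

/-- The univariate Gaussian density with mean `m` and variance `v`. -/
noncomputable def gauss1 (m v x : ℝ) : ℝ :=
  (Real.sqrt (2 * Real.pi * v))⁻¹ * Real.exp (-(x - m) ^ 2 / (2 * v))

/-- The bivariate Gaussian density with mean `(m₁, m₂)` and covariance matrix
`[[v₁, c], [c, v₂]]`. -/
noncomputable def gauss2 (m₁ m₂ v₁ v₂ c x y : ℝ) : ℝ :=
  (2 * Real.pi * Real.sqrt (v₁ * v₂ - c ^ 2))⁻¹ *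
    Real.exp (-(v₂ * (x - m₁) ^ 2 - 2 * c * (x - m₁) * (y - m₂) + v₁ * (y - m₂) ^ 2) /
      (2 * (v₁ * v₂ - c ^ 2)))

open ProbabilityTheory

/-!
The product density `p₁(ξ₁) p₂(ξ₂)` has vanishing cross covariance, so its matching Gaussian is
the bivariate Gaussian with diagonal covariance, which is the product of the matching univariate
Gaussians. Since `log (f(x) g(y)) = log f(x) + log g(y)` and each factor integrates to one, the
entropy of any product of densities is the sum of their entropies; applying this to both
`p₁ ⊗ p₂` and its Gaussian and subtracting gives additivity of negentropy.
-/

theorem mul_mul_logb_mul (b x y : ℝ) :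
    x * y * logb b (x * y) = x * logb b x * y + x * (y * logb b y) := by
  by_cases hx : x = 0
  · simp [hx]
  by_cases hy : y = 0
  · simp [hy]
  rw [logb_mul hx hy]
  ring

section Product

variable {α β : Type*} [MeasurableSpace α] [MeasurableSpace β] {μ : Measure α} {ν : Measure β}
  [SFinite μ] [SFinite ν] {f : α → ℝ} {g : β → ℝ}

theorem integral_mul_logb_prod (b : ℝ) (hf : Integrable f μ) (hg : Integrable g ν)
    (hf_one : ∫ x, f x ∂μ = 1) (hg_one : ∫ y, g y ∂ν = 1)
    (hf_ent : Integrable (fun x => f x * logb b (f x)) μ)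
    (hg_ent : Integrable (fun y => g y * logb b (g y)) ν) :
    ∫ z, f z.1 * g z.2 * logb b (f z.1 * g z.2) ∂μ.prod ν
      = ∫ x, f x * logb b (f x) ∂μ + ∫ y, g y * logb b (g y) ∂ν := by
  simp_rw [mul_mul_logb_mul]
  rw [integral_add (hf_ent.mul_prod hg) (hf.mul_prod hg_ent),
    integral_prod_mul (fun x => f x * logb b (f x)) g,
    integral_prod_mul f (fun y => g y * logb b (g y)), hf_one, hg_one, mul_one, one_mul]

end Product

theorem H2_mul {f g : ℝ → ℝ} (hf : Integrable f) (hg : Integrable g)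
    (hf_one : ∫ x, f x = 1) (hg_one : ∫ y, g y = 1)
    (hf_ent : Integrable (fun x => f x * logb 2 (f x)))
    (hg_ent : Integrable (fun y => g y * logb 2 (g y))) :
    H2 (fun ξ => f ξ.1 * g ξ.2) = H1 f + H1 g := by
  rw [H2, H1, H1, Measure.volume_eq_prod,
    integral_mul_logb_prod 2 hf hg hf_one hg_one hf_ent hg_ent, neg_add]

theorem integral_sub_mean_mul_eq_zero {p : ℝ → ℝ} {m : ℝ} (hp : Integrable p)
    (hp_mean : Integrable fun x => x * p x) (hp_one : ∫ x, p x = 1) (hm : ∫ x, x * p x = m) :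
    ∫ x, (x - m) * p x = 0 := by
  simp_rw [sub_mul]
  rw [integral_sub hp_mean (hp.const_mul m), integral_const_mul, hm, hp_one, mul_one, sub_self]

section Gaussian

variable {m v v₁ v₂ : ℝ}

theorem gauss1_eq_gaussianPDFReal (hv : 0 < v) : gauss1 m v = gaussianPDFReal m ⟨v, hv.le⟩ := by
  ext x
  simp [gauss1, gaussianPDFReal]
  rfl

theorem integrable_gauss1 (hv : 0 < v) : Integrable (gauss1 m v) :=
  gauss1_eq_gaussianPDFReal hv ▸ integrable_gaussianPDFReal m _

theorem integral_gauss1 (hv : 0 < v) : ∫ x, gauss1 m v x = 1 :=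
  gauss1_eq_gaussianPDFReal hv ▸
    integral_gaussianPDFReal_eq_one m fun h => hv.ne' (congrArg Subtype.val h)

theorem integrable_sq_mul_gauss1 (hv : 0 < v) :
    Integrable fun x => (x - m) ^ 2 * gauss1 m v x := by
  have hb : 0 < (2 * v)⁻¹ := by positivity
  have h : Integrable fun x : ℝ => x ^ 2 * exp (-(2 * v)⁻¹ * x ^ 2) := by
    simpa using integrable_rpow_mul_exp_neg_mul_sq hb (by norm_num : (-1 : ℝ) < 2)
  refine ((h.comp_sub_right m).const_mul (sqrt (2 * π * v))⁻¹).congr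
    (.of_forall fun x => ?_)
  simp only [gauss1]
  rw [neg_div, div_eq_inv_mul, neg_mul]
  ring

theorem log_gauss1 (hv : 0 < v) (x : ℝ) :
    log (gauss1 m v x) = log (sqrt (2 * π * v))⁻¹ - (x - m) ^ 2 / (2 * v) := by
  have hs : 0 < sqrt (2 * π * v) := sqrt_pos.mpr (by positivity)
  rw [gauss1, log_mul (inv_ne_zero hs.ne') (exp_ne_zero _), log_exp, neg_div, ← sub_eq_add_neg]

theorem integrable_gauss1_mul_logb (b : ℝ) (hv : 0 < v) :
    Integrable fun x => gauss1 m v x * logb b (gauss1 m v x) := by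
  have hsum := ((integrable_gauss1 (m := m) hv).const_mul (log (sqrt (2 * π * v))⁻¹ / log b)).sub
    ((integrable_sq_mul_gauss1 (m := m) hv).const_mul (log b * (2 * v))⁻¹)
  refine hsum.congr (.of_forall fun x => ?_)
  simp only [Pi.sub_apply, logb, log_gauss1 hv, mul_inv]
  ring

theorem gauss2_zero_eq_gauss1_mul_gauss1 (hv₁ : 0 < v₁) (hv₂ : 0 < v₂) (m₁ m₂ x y : ℝ) :
    gauss2 m₁ m₂ v₁ v₂ 0 x y = gauss1 m₁ v₁ x * gauss1 m₂ v₂ y := by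
  have hsqrt : sqrt (2 * π * v₁) * sqrt (2 * π * v₂) = 2 * π * sqrt (v₁ * v₂ - 0 ^ 2) := by
    rw [← sqrt_mul (by positivity),
      show 2 * π * v₁ * (2 * π * v₂) = (2 * π) ^ 2 * (v₁ * v₂ - 0 ^ 2) by ring,
      sqrt_mul (by positivity), sqrt_sq (by positivity)]
  rw [gauss2, gauss1, gauss1, mul_mul_mul_comm, ← exp_add, ← mul_inv, hsqrt]
  congr 2
  field_simp
  ring

end Gaussian

theorem negentropy_additive_of_product_general (p₁ p₂ : ℝ → ℝ) (m₁ m₂ v₁ v₂ : ℝ)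
    (h₁int : Integrable p₁) (h₁norm : ∫ x : ℝ, p₁ x = 1)
    (h₁meanInt : Integrable (fun x : ℝ => x * p₁ x)) (hm₁ : ∫ x : ℝ, x * p₁ x = m₁)
    (hv₁pos : 0 < v₁)
    (h₁ent : Integrable (fun x : ℝ => p₁ x * Real.logb 2 (p₁ x)))
    (h₂int : Integrable p₂) (h₂norm : ∫ x : ℝ, p₂ x = 1)
    (hv₂pos : 0 < v₂)
    (h₂ent : Integrable (fun x : ℝ => p₂ x * Real.logb 2 (p₂ x))) :
    (∫ ξ : ℝ × ℝ, (ξ.1 - m₁) * (ξ.2 - m₂) * (p₁ ξ.1 * p₂ ξ.2)) = 0 ∧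
    (∀ ξ : ℝ × ℝ, gauss2 m₁ m₂ v₁ v₂ 0 ξ.1 ξ.2 = gauss1 m₁ v₁ ξ.1 * gauss1 m₂ v₂ ξ.2) ∧
    H2 (fun ξ : ℝ × ℝ => gauss2 m₁ m₂ v₁ v₂ 0 ξ.1 ξ.2) -
        H2 (fun ξ : ℝ × ℝ => p₁ ξ.1 * p₂ ξ.2)
      = (H1 (gauss1 m₁ v₁) - H1 p₁) + (H1 (gauss1 m₂ v₂) - H1 p₂) := by
  have hgauss (ξ : ℝ × ℝ) : gauss2 m₁ m₂ v₁ v₂ 0 ξ.1 ξ.2 = gauss1 m₁ v₁ ξ.1 * gauss1 m₂ v₂ ξ.2 :=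
    gauss2_zero_eq_gauss1_mul_gauss1 hv₁pos hv₂pos m₁ m₂ ξ.1 ξ.2
  refine ⟨?_, hgauss, ?_⟩
  · calc ∫ ξ : ℝ × ℝ, (ξ.1 - m₁) * (ξ.2 - m₂) * (p₁ ξ.1 * p₂ ξ.2)
        = ∫ ξ : ℝ × ℝ, (ξ.1 - m₁) * p₁ ξ.1 * ((ξ.2 - m₂) * p₂ ξ.2) := by
          congr with ξ; ring
      _ = (∫ x, (x - m₁) * p₁ x) * ∫ y, (y - m₂) * p₂ y := by
          rw [Measure.volume_eq_prod]
          exact integral_prod_mul (fun x => (x - m₁) * p₁ x) (fun y => (y - m₂) * p₂ y)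
      _ = 0 := by rw [integral_sub_mean_mul_eq_zero h₁int h₁meanInt h₁norm hm₁, zero_mul]
  · rw [funext hgauss,
      H2_mul (integrable_gauss1 hv₁pos) (integrable_gauss1 hv₂pos) (integral_gauss1 hv₁pos)
        (integral_gauss1 hv₂pos) (integrable_gauss1_mul_logb 2 hv₁pos)
        (integrable_gauss1_mul_logb 2 hv₂pos),
      H2_mul h₁int h₂int h₁norm h₂norm h₁ent h₂ent]
    ring

/-- Additivity of negentropy for product densities: if `p₁`, `p₂` are probability
densities on ℝ with finite means `m₁`, `m₂`, strictly positive finite variances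
`v₁`, `v₂` and finite differential entropies, and `p(ξ₁,ξ₂) = p₁(ξ₁)p₂(ξ₂)`, then
the cross covariance of `p` vanishes, the Gaussian matching the mean vector and
covariance matrix of `p` factorizes as the product of the Gaussians matching `p₁`
and `p₂`, and the negentropies satisfy `N[p] = N[p₁] + N[p₂]`. -/
theorem negentropy_additive_of_product (p₁ p₂ : ℝ → ℝ) (m₁ m₂ v₁ v₂ : ℝ)
    (h₁nn : ∀ x, 0 ≤ p₁ x) (h₁int : Integrable p₁) (h₁norm : ∫ x : ℝ, p₁ x = 1)
    (h₁meanInt : Integrable (fun x : ℝ => x * p₁ x)) (hm₁ : ∫ x : ℝ, x * p₁ x = m₁)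
    (h₁varInt : Integrable (fun x : ℝ => (x - m₁) ^ 2 * p₁ x))
    (hv₁ : ∫ x : ℝ, (x - m₁) ^ 2 * p₁ x = v₁) (hv₁pos : 0 < v₁)
    (h₁ent : Integrable (fun x : ℝ => p₁ x * Real.logb 2 (p₁ x)))
    (h₂nn : ∀ x, 0 ≤ p₂ x) (h₂int : Integrable p₂) (h₂norm : ∫ x : ℝ, p₂ x = 1)
    (h₂meanInt : Integrable (fun x : ℝ => x * p₂ x)) (hm₂ : ∫ x : ℝ, x * p₂ x = m₂)
    (h₂varInt : Integrable (fun x : ℝ => (x - m₂) ^ 2 * p₂ x))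
    (hv₂ : ∫ x : ℝ, (x - m₂) ^ 2 * p₂ x = v₂) (hv₂pos : 0 < v₂)
    (h₂ent : Integrable (fun x : ℝ => p₂ x * Real.logb 2 (p₂ x))) :
    (∫ ξ : ℝ × ℝ, (ξ.1 - m₁) * (ξ.2 - m₂) * (p₁ ξ.1 * p₂ ξ.2)) = 0 ∧
    (∀ ξ : ℝ × ℝ, gauss2 m₁ m₂ v₁ v₂ 0 ξ.1 ξ.2 = gauss1 m₁ v₁ ξ.1 * gauss1 m₂ v₂ ξ.2) ∧
    H2 (fun ξ : ℝ × ℝ => gauss2 m₁ m₂ v₁ v₂ 0 ξ.1 ξ.2) -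
        H2 (fun ξ : ℝ × ℝ => p₁ ξ.1 * p₂ ξ.2)
      = (H1 (gauss1 m₁ v₁) - H1 p₁) + (H1 (gauss1 m₂ v₂) - H1 p₂) :=
  negentropy_additive_of_product_general p₁ p₂ m₁ m₂ v₁ v₂ h₁int h₁norm h₁meanInt hm₁ hv₁pos h₁ent
    h₂int h₂norm hv₂pos h₂ent
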